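/- arXiv:1512.02670 — 3 statements merged into one kernel-verified Lean document; each statement's English description precedes it below -/
import Mathlib

section
/- There exists an absolute constant C > 0 such that for arbitrary finite sets A, B, C', D of real numbers, the number of solutions (a,b,c,d) ∈ A × B × C' × D to the equation a − b = cd is at most C·((|A||B||C'||D|)^(2/3) + |A||D| + |B||C'|). -/
/-!
Read `a - b = c d` as the incidence of the point `(c, b) ∈ C' × B` with the line `y = a - d x`,
`(a, d) ∈ A × D`; two distinct points lie on at most one such line, so Cauchy–Schwarz bounds
the incidences between `P` points and `L` lines by `L + P √L`. Cut `C'` and `B` into `r`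
consecutive blocks each: every line is monotone, so it meets at most `2r` of the `r²` cells of
the grid, and applying the Cauchy–Schwarz bound in each cell gives
`I ≤ 2 r k + 4 √2 |B| |C'| √(k / r)` with `k = |A| |D|`. The choice `r³ ≈ (|B| |C'|)² / k` makes
both terms `O((k |B| |C'|)^(2/3))`, except when this `r` exceeds `|B|` or `|C'|`; there the trivial
bounds `I ≤ k |C'|` and `I ≤ k |B| + |B| |C'|` suffice.
-/

open Finset

section Incidences

variable {α β : Type*} (R : β → α → Prop) [∀ l, DecidablePred (R l)]

theorem sum_card_filter_sq_le (P : Finset α) (L : Finset β)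
    (hR : ∀ p q, p ≠ q → {l | R l p ∧ R l q}.Subsingleton) :
    ∑ l ∈ L, #{p ∈ P | R l p} ^ 2 ≤ #P ^ 2 + ∑ l ∈ L, #{p ∈ P | R l p} := by
  have hsq (l : β) :
      #{p ∈ P | R l p} ^ 2 = #{p ∈ P | R l p} + #{x ∈ P.offDiag | R l x.1 ∧ R l x.2} := by
    have : {x ∈ P.offDiag | R l x.1 ∧ R l x.2} = {p ∈ P | R l p}.offDiag := by
      ext; simp only [mem_filter, mem_offDiag]; tauto
    rw [this, offDiag_card, sq]
    have := Nat.le_mul_self #{p ∈ P | R l p}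
    omega
  have hpairs : ∑ l ∈ L, #{x ∈ P.offDiag | R l x.1 ∧ R l x.2} ≤ #P ^ 2 :=
    calc ∑ l ∈ L, #{x ∈ P.offDiag | R l x.1 ∧ R l x.2}
        = ∑ x ∈ P.offDiag, #{l ∈ L | R l x.1 ∧ R l x.2} :=
          sum_card_bipartiteAbove_eq_sum_card_bipartiteBelow _
      _ ≤ ∑ x ∈ P.offDiag, 1 := sum_le_sum fun x hx => card_le_one.2 fun l₁ h₁ l₂ h₂ =>
          hR x.1 x.2 (mem_offDiag.1 hx).2.2 (mem_filter.1 h₁).2 (mem_filter.1 h₂).2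
      _ ≤ #P ^ 2 := by simp [offDiag_card, sq]
  rw [sum_congr rfl fun l _ => hsq l, sum_add_distrib]
  omega

lemma le_sq_add_mul_of_sq_le {x a b : ℝ} (ha : 0 ≤ a) (hb : 0 ≤ b)
    (h : x ^ 2 ≤ a ^ 2 * (b ^ 2 + x)) : x ≤ a ^ 2 + b * a := by
  by_contra! hlt
  nlinarith [mul_nonneg hb ha]

theorem sum_card_filter_le (P : Finset α) (L : Finset β)
    (hR : ∀ p q, p ≠ q → {l | R l p ∧ R l q}.Subsingleton) :
    (∑ l ∈ L, #{p ∈ P | R l p} : ℝ) ≤ #L + #P * √(#L : ℝ) := by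
  have hL : √(#L : ℝ) ^ 2 = #L := Real.sq_sqrt (by positivity)
  have hI : (∑ l ∈ L, #{p ∈ P | R l p} : ℝ) ^ 2
      ≤ √(#L : ℝ) ^ 2 * (#P ^ 2 + ∑ l ∈ L, (#{p ∈ P | R l p} : ℝ)) := by
    rw [hL]
    refine sq_sum_le_card_mul_sum_sq.trans (mul_le_mul_of_nonneg_left ?_ (by positivity))
    exact_mod_cast sum_card_filter_sq_le R P L hR
  simpa [hL] using le_sq_add_mul_of_sq_le (Real.sqrt_nonneg _) (Nat.cast_nonneg _) hI

theorem sum_card_filter_le' (P : Finset α) (L : Finset β)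
    (hR : ∀ p q, p ≠ q → {l | R l p ∧ R l q}.Subsingleton) :
    (∑ l ∈ L, #{p ∈ P | R l p} : ℝ)
      ≤ #{l ∈ L | ∃ p ∈ P, R l p} + #P * √(#{l ∈ L | ∃ p ∈ P, R l p} : ℝ) := by
  have h : ∑ l ∈ L with ∃ p ∈ P, R l p, #{p ∈ P | R l p} = ∑ l ∈ L, #{p ∈ P | R l p} :=
    sum_filter_of_ne fun l _ hne => by
      obtain ⟨p, hp⟩ := card_ne_zero.1 hne
      exact ⟨p, (mem_filter.1 hp).1, (mem_filter.1 hp).2⟩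
  rw [← Nat.cast_sum, ← h, Nat.cast_sum]
  exact sum_card_filter_le R P _ hR

theorem sum_card_filter_le_of_cells {ι : Type*} [DecidableEq ι] (P : Finset α) (L : Finset β)
    (cells : Finset ι) (cell : α → ι) (s t : ℕ)
    (hR : ∀ p q, p ≠ q → {l | R l p ∧ R l q}.Subsingleton)
    (hcell : ∀ p ∈ P, cell p ∈ cells) (hs : ∀ i ∈ cells, #{p ∈ P | cell p = i} ≤ s)
    (ht : ∀ l ∈ L, #({p ∈ P | R l p}.image cell) ≤ t) :
    (∑ l ∈ L, #{p ∈ P | R l p} : ℝ) ≤ t * #L + s * √(#cells * t * #L) := by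
  set Pᵢ : ι → Finset α := fun i => {p ∈ P | cell p = i}
  set Lᵢ : ι → Finset β := fun i => {l ∈ L | ∃ p ∈ Pᵢ i, R l p}
  have hsplit (l : β) : #{p ∈ P | R l p} = ∑ i ∈ cells, #{p ∈ Pᵢ i | R l p} := by
    rw [card_eq_sum_card_fiberwise fun p hp => hcell p (mem_filter.1 hp).1]
    refine sum_congr rfl fun i _ => congrArg card ?_
    ext p
    simp only [Pᵢ, mem_filter]
    tauto
  have hcellᵢ (i : ι) (hi : i ∈ cells) :
      (∑ l ∈ L, #{p ∈ Pᵢ i | R l p} : ℝ) ≤ #(Lᵢ i) + s * √(#(Lᵢ i) : ℝ) := by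
    refine (sum_card_filter_le' R (Pᵢ i) L hR).trans ?_
    gcongr
    exact hs i hi
  have hlines : ∑ i ∈ cells, #(Lᵢ i) ≤ t * #L :=
    calc ∑ i ∈ cells, #(Lᵢ i) = ∑ l ∈ L, #{i ∈ cells | ∃ p ∈ Pᵢ i, R l p} :=
          sum_card_bipartiteAbove_eq_sum_card_bipartiteBelow _
      _ ≤ ∑ l ∈ L, t := sum_le_sum fun l hl => (card_le_card fun i hi => by
          obtain ⟨p, hp, hpl⟩ := (mem_filter.1 hi).2
          exact mem_image.2 ⟨p, mem_filter.2 ⟨(mem_filter.1 hp).1, hpl⟩, (mem_filter.1 hp).2⟩).trans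
            (ht l hl)
      _ = t * #L := by rw [sum_const, smul_eq_mul, mul_comm]
  have hsqrt : ∑ i ∈ cells, √(#(Lᵢ i) : ℝ) ≤ √(#cells : ℝ) * √(∑ i ∈ cells, (#(Lᵢ i) : ℝ)) := by
    simpa using Real.sum_sqrt_mul_sqrt_le cells (fun _ => zero_le_one)
      fun i => (#(Lᵢ i)).cast_nonneg
  calc (∑ l ∈ L, #{p ∈ P | R l p} : ℝ)
      = ∑ i ∈ cells, ∑ l ∈ L, (#{p ∈ Pᵢ i | R l p} : ℝ) := by
        rw [sum_comm]; exact_mod_cast sum_congr rfl fun l _ => hsplit l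
    _ ≤ ∑ i ∈ cells, ((#(Lᵢ i) : ℝ) + s * √(#(Lᵢ i) : ℝ)) := sum_le_sum hcellᵢ
    _ = ∑ i ∈ cells, (#(Lᵢ i) : ℝ) + s * ∑ i ∈ cells, √(#(Lᵢ i) : ℝ) := by
        rw [sum_add_distrib, mul_sum]
    _ ≤ t * #L + s * (√(#cells : ℝ) * √(t * #L : ℝ)) := by
        gcongr
        · exact_mod_cast hlines
        · exact hsqrt.trans (by gcongr; exact_mod_cast hlines)
    _ = t * #L + s * √(#cells * t * #L) := by
        rw [mul_assoc (#cells : ℝ), Real.sqrt_mul (Nat.cast_nonneg _) ((t : ℝ) * #L)]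

end Incidences

section Blocks

variable {α : Type*} [LinearOrder α]

theorem exists_monotone_blocks (s : Finset α) {r : ℕ} (hr : 0 < r) :
    ∃ φ : α → ℕ, Monotone φ ∧ (∀ x ∈ s, φ x < r) ∧ ∀ i, #{x ∈ s | φ x = i} ≤ #s / r + 1 := by
  set b := #s / r + 1
  have hb : 0 < b := Nat.succ_pos _
  set rank : α → ℕ := fun x => #{y ∈ s | y < x}
  have rank_mono : Monotone rank := fun x y hxy =>
    card_le_card fun z => by simpa only [mem_filter] using fun h => ⟨h.1, h.2.trans_le hxy⟩
  have rank_strictMonoOn : StrictMonoOn rank s := fun x hx y _ hxy =>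
    card_lt_card <| ssubset_iff_of_subset (fun z => by
      simpa only [mem_filter] using fun h => ⟨h.1, h.2.trans hxy⟩)
      |>.2 ⟨x, mem_filter.2 ⟨hx, hxy⟩, by simp⟩
  refine ⟨fun x => rank x / b, fun x y h => Nat.div_le_div_right (rank_mono h),
    fun x hx => ?_, fun i => ?_⟩
  · have : rank x < #s := card_lt_card (filter_ssubset.2 ⟨x, hx, lt_irrefl x⟩)
    have hsb : #s < r * b := Nat.lt_mul_div_succ #s hr
    exact (Nat.div_lt_iff_lt_mul hb).2 (by linarith)
  · calc #{x ∈ s | rank x / b = i} ≤ #(Ico (i * b) (i * b + b)) := by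
          refine card_le_card_of_injOn rank (fun x hx => ?_)
            (rank_strictMonoOn.injOn.mono (filter_subset _ _))
          obtain rfl := (mem_filter.1 hx).2
          exact mem_Ico.2 ⟨Nat.div_mul_le_self _ _, Nat.lt_div_mul_add hb⟩
      _ = b := by simp

variable {s : Finset α} {f g : α → ℕ} {r : ℕ}

theorem card_image_prod_le_of_monotoneOn (hf : MonotoneOn f s) (hg : MonotoneOn g s)
    (hfr : ∀ x ∈ s, f x < r) (hgr : ∀ x ∈ s, g x < r) :
    #(s.image fun x => (f x, g x)) ≤ 2 * r := by
  -- along a monotone staircase the sum of the two coordinates is injective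
  calc #(s.image fun x => (f x, g x)) ≤ #(range (2 * r)) := by
        refine card_le_card_of_injOn (fun p => p.1 + p.2) ?_ ?_
        · rintro _ hp
          obtain ⟨x, hx, rfl⟩ := mem_image.1 hp
          have := hfr x hx
          have := hgr x hx
          exact mem_range.2 (show f x + g x < 2 * r by omega)
        · rintro _ hp _ hq hpq
          obtain ⟨x, hx, rfl⟩ := mem_image.1 hp
          obtain ⟨y, hy, rfl⟩ := mem_image.1 hq
          simp only [Prod.mk.injEq] at hpq ⊢
          rcases le_total x y with h | h
          · have := hf hx hy h; have := hg hx hy h; omega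
          · have := hf hy hx h; have := hg hy hx h; omega
    _ = 2 * r := card_range _

theorem card_image_prod_le_of_antitoneOn (hf : MonotoneOn f s) (hg : AntitoneOn g s)
    (hfr : ∀ x ∈ s, f x < r) (hgr : ∀ x ∈ s, g x < r) :
    #(s.image fun x => (f x, g x)) ≤ 2 * r :=
  calc #(s.image fun x => (f x, g x))
      = #((s.image fun x => (f x, r - 1 - g x)).image fun p => (p.1, r - 1 - p.2)) := by
        rw [image_image]
        refine congrArg card (image_congr fun x hx => ?_)
        have := hgr x hx
        simp only [Function.comp_apply, Prod.mk.injEq, true_and]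
        omega
    _ ≤ #(s.image fun x => (f x, r - 1 - g x)) := card_image_le
    _ ≤ 2 * r := card_image_prod_le_of_monotoneOn hf
        (fun x hx y hy h => Nat.sub_le_sub_left (hg hx hy h) _) hfr fun x hx => by
          have := hgr x hx; omega

end Blocks

section Solutions

open scoped Classical

/-- `incident (a, d) (c, b)` says that `a - b = c * d`, i.e. that the point `(c, b)` lies on the
line `y = a - d x`. -/
def incident (l p : ℝ × ℝ) : Prop := l.1 - p.2 = p.1 * l.2

theorem incident_subsingleton {p q : ℝ × ℝ} (hpq : p ≠ q) :
    {l | incident l p ∧ incident l q}.Subsingleton := by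
  rintro ⟨a, d⟩ ⟨hp, hq⟩ ⟨a', d'⟩ ⟨hp', hq'⟩
  simp only [incident] at hp hq hp' hq'
  have hc : p.1 ≠ q.1 := fun h => hpq (Prod.ext h (by rw [h] at hp; linarith))
  have hd : d = d' :=
    mul_left_cancel₀ (sub_ne_zero.2 hc) (by linear_combination hq - hp - hq' + hp')
  subst hd
  simp only [Prod.mk.injEq, and_true]
  linarith

noncomputable def solutions (A B C D : Finset ℝ) : Finset (ℝ × ℝ × ℝ × ℝ) :=
  {x ∈ A ×ˢ B ×ˢ C ×ˢ D | x.1 - x.2.1 = x.2.2.1 * x.2.2.2}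

theorem card_solutions_eq_sum (A B C D : Finset ℝ) :
    #(solutions A B C D) = ∑ l ∈ A ×ˢ D, #{p ∈ C ×ˢ B | incident l p} := by
  calc #(solutions A B C D) = #{x ∈ (A ×ˢ D) ×ˢ (C ×ˢ B) | incident x.1 x.2} := by
        refine card_nbij' (fun x => ((x.1, x.2.2.2), (x.2.2.1, x.2.1)))
          (fun y => (y.1.1, y.2.2, y.2.1, y.1.2)) ?_ ?_ (fun _ _ => rfl) (fun _ _ => rfl)
        · rintro ⟨a, b, c, d⟩ hx
          simp only [solutions, mem_coe, mem_filter, mem_product] at hx ⊢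
          exact ⟨⟨⟨hx.1.1, hx.1.2.2.2⟩, hx.1.2.2.1, hx.1.2.1⟩, hx.2⟩
        · rintro ⟨⟨a, d⟩, c, b⟩ hx
          simp only [solutions, mem_coe, mem_filter, mem_product] at hx ⊢
          exact ⟨⟨hx.1.1.1, hx.1.2.2, hx.1.2.1, hx.1.1.2⟩, hx.2⟩
    _ = ∑ l ∈ A ×ˢ D, #{p ∈ C ×ˢ B | incident l p} := by
        simp only [card_filter, sum_product]

theorem card_solutions_le_mul (A B C D : Finset ℝ) :
    #(solutions A B C D) ≤ #A * #D * #C := by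
  rw [card_solutions_eq_sum, ← card_product]
  refine (sum_le_card_nsmul _ _ _ fun l _ => ?_).trans_eq (smul_eq_mul _ _)
  refine card_le_card_of_injOn Prod.fst (fun p hp => (mem_product.1 (mem_filter.1 hp).1).1) ?_
  intro p hp q hq h
  have hp : l.1 - p.2 = p.1 * l.2 := (mem_filter.1 hp).2
  have hq : l.1 - q.2 = q.1 * l.2 := (mem_filter.1 hq).2
  exact Prod.ext h (by rw [h] at hp; linarith)

theorem card_solutions_le_add (A B C D : Finset ℝ) :
    #(solutions A B C D) ≤ #A * #D * #B + #B * #C := by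
  rw [← card_filter_add_card_filter_not (p := fun x : ℝ × ℝ × ℝ × ℝ => x.2.2.2 ≠ 0)]
  gcongr
  · -- away from `d = 0`, the factor `c` is determined by `a`, `b`, `d`
    calc _ ≤ #(A ×ˢ B ×ˢ D) := by
          refine card_le_card_of_injOn (fun x => (x.1, x.2.1, x.2.2.2)) ?_ ?_
          · intro x hx
            simp only [solutions, mem_coe, mem_filter, mem_product] at hx ⊢
            tauto
          · intro x hx y hy h
            simp only [solutions, mem_coe, mem_filter, Prod.mk.injEq] at hx hy h
            obtain ⟨⟨-, hx⟩, hd⟩ := hx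
            obtain ⟨⟨-, hy⟩, -⟩ := hy
            obtain ⟨h1, h2, h3⟩ := h
            refine Prod.ext h1 (Prod.ext h2 (Prod.ext ?_ h3))
            exact mul_right_cancel₀ hd (by rw [← hx, h1, h2, h3, hy])
      _ = #A * #D * #B := by simp only [card_product]; ring
  · -- on `d = 0` the equation reads `a = b`
    calc _ ≤ #(B ×ˢ C) := by
          refine card_le_card_of_injOn (fun x => (x.2.1, x.2.2.1)) ?_ ?_
          · intro x hx
            simp only [solutions, mem_coe, mem_filter, mem_product] at hx ⊢
            tauto
          · intro x hx y hy h
            simp only [solutions, mem_coe, mem_filter, Prod.mk.injEq,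
              not_not] at hx hy h
            obtain ⟨⟨-, hx⟩, hdx⟩ := hx
            obtain ⟨⟨-, hy⟩, hdy⟩ := hy
            rw [hdx, mul_zero, sub_eq_zero] at hx
            rw [hdy, mul_zero, sub_eq_zero] at hy
            exact Prod.ext (by rw [hx, hy, h.1]) (Prod.ext h.1 (Prod.ext h.2 (hdx.trans hdy.symm)))
      _ = #B * #C := card_product _ _

end Solutions

section Grid

open scoped Classical

theorem card_image_cells_le {φ ψ : ℝ → ℕ} {r : ℕ} {C B : Finset ℝ} (hφ : Monotone φ)
    (hψ : Monotone ψ) (hφr : ∀ c ∈ C, φ c < r) (hψr : ∀ b ∈ B, ψ b < r) (l : ℝ × ℝ) :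
    #({p ∈ C ×ˢ B | incident l p}.image fun p => (φ p.1, ψ p.2)) ≤ 2 * r := by
  set S := {p ∈ C ×ˢ B | incident l p}.image Prod.fst
  have hS (c : ℝ) (hc : c ∈ S) : c ∈ C ∧ l.1 - c * l.2 ∈ B := by
    obtain ⟨p, hp, rfl⟩ := mem_image.1 hc
    obtain ⟨hpCB, hpl⟩ := mem_filter.1 hp
    exact ⟨(mem_product.1 hpCB).1, by rw [← hpl, sub_sub_cancel]; exact (mem_product.1 hpCB).2⟩
  have himage : {p ∈ C ×ˢ B | incident l p}.image (fun p => (φ p.1, ψ p.2))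
      = S.image fun c => (φ c, ψ (l.1 - c * l.2)) := by
    rw [image_image]
    refine image_congr fun p hp => ?_
    have hpl : l.1 - p.2 = p.1 * l.2 := (mem_filter.1 hp).2
    simp only [Function.comp_apply, ← hpl, sub_sub_cancel]
  rw [himage]
  rcases le_total l.2 0 with hd | hd
  · exact card_image_prod_le_of_monotoneOn (hφ.monotoneOn _)
      (fun x _ y _ h => hψ (by nlinarith)) (fun c hc => hφr c (hS c hc).1)
      fun c hc => hψr _ (hS c hc).2
  · exact card_image_prod_le_of_antitoneOn (hφ.monotoneOn _)
      (fun x _ y _ h => hψ (by nlinarith)) (fun c hc => hφr c (hS c hc).1)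
      fun c hc => hψr _ (hS c hc).2

lemma natCast_div_add_one_le {m r : ℕ} (hr : 0 < r) (hrm : r ≤ m) :
    ((m / r : ℕ) : ℝ) + 1 ≤ 2 * m / r := by
  have h₁ : ((m / r : ℕ) : ℝ) ≤ m / r := Nat.cast_div_le
  have h₂ : (1 : ℝ) ≤ m / r := (one_le_div (by positivity)).2 (by exact_mod_cast hrm)
  linarith [show (2 * m / r : ℝ) = m / r + m / r by ring]

theorem card_solutions_le_of_blocks (A B C D : Finset ℝ) {r : ℕ} (hr : 0 < r) (hrC : r ≤ #C)
    (hrB : r ≤ #B) :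
    (#(solutions A B C D) : ℝ)
      ≤ 2 * r * (#A * #D) + 4 * #C * #B / r ^ 2 * √(2 * r ^ 3 * (#A * #D)) := by
  obtain ⟨φ, hφ, hφr, hφs⟩ := exists_monotone_blocks C hr
  obtain ⟨ψ, hψ, hψr, hψs⟩ := exists_monotone_blocks B hr
  have hcell (p : ℝ × ℝ) (hp : p ∈ C ×ˢ B) : (φ p.1, ψ p.2) ∈ range r ×ˢ range r :=
    mem_product.2 ⟨mem_range.2 (hφr _ (mem_product.1 hp).1),
      mem_range.2 (hψr _ (mem_product.1 hp).2)⟩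
  have hs (i : ℕ × ℕ) (_ : i ∈ range r ×ˢ range r) :
      #{p ∈ C ×ˢ B | (φ p.1, ψ p.2) = i} ≤ (#C / r + 1) * (#B / r + 1) := by
    have : {p ∈ C ×ˢ B | (φ p.1, ψ p.2) = i} = {c ∈ C | φ c = i.1} ×ˢ {b ∈ B | ψ b = i.2} := by
      ext p
      simp only [mem_filter, mem_product, Prod.ext_iff]
      tauto
    rw [this, card_product]
    exact Nat.mul_le_mul (hφs _) (hψs _)
  have key := sum_card_filter_le_of_cells incident (C ×ˢ B) (A ×ˢ D) _ _ _ (2 * r)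
    (fun _ _ => incident_subsingleton) hcell hs fun l _ => card_image_cells_le hφ hψ hφr hψr l
  rw [card_solutions_eq_sum]
  push_cast
  refine key.trans ?_
  simp only [card_product, card_range]
  push_cast
  rw [show (r : ℝ) * r * (2 * r) * (#A * #D) = 2 * r ^ 3 * (#A * #D) by ring]
  gcongr
  calc ((#C / r : ℕ) + 1 : ℝ) * ((#B / r : ℕ) + 1)
      ≤ (2 * #C / r) * (2 * #B / r) := by
        gcongr <;> exact natCast_div_add_one_le hr ‹_›
    _ = 4 * #C * #B / r ^ 2 := by ring

end Grid

section Numerics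

lemma le_rpow_two_thirds {x y : ℝ} (hx : 0 ≤ x) (h : y ^ 3 ≤ x ^ 2) :
    y ≤ x ^ (2 / 3 : ℝ) := by
  refine le_of_pow_le_pow_left₀ three_ne_zero (Real.rpow_nonneg hx _) ?_
  rw [← Real.rpow_mul_natCast hx]
  norm_num [h]

lemma le_mul_rpow_two_thirds {a b : ℝ} (ha : 0 ≤ a) (hb : 0 ≤ b) (h : a ≤ b ^ 2) :
    a ≤ (a * b) ^ (2 / 3 : ℝ) :=
  le_rpow_two_thirds (mul_nonneg ha hb) (by nlinarith [mul_nonneg ha ha])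

lemma mul_le_rpow_two_thirds {k P r : ℝ} (hk : 0 ≤ k) (hP : 0 ≤ P)
    (h : k * r ^ 3 ≤ 8 * P ^ 2) : r * k ≤ 2 * (k * P) ^ (2 / 3 : ℝ) := by
  have : r * k / 2 ≤ (k * P) ^ (2 / 3 : ℝ) := by
    refine le_rpow_two_thirds (mul_nonneg hk hP) ?_
    calc (r * k / 2) ^ 3 = k ^ 2 * (k * r ^ 3) / 8 := by ring
      _ ≤ k ^ 2 * (8 * P ^ 2) / 8 := by gcongr
      _ = (k * P) ^ 2 := by ring
  linarith

lemma div_sq_mul_sqrt_le_rpow_two_thirds {k P r : ℝ} (hk : 0 ≤ k) (hP : 0 ≤ P) (hr : 0 < r)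
    (h : P ^ 2 ≤ k * r ^ 3) : P / r ^ 2 * √(r ^ 3 * k) ≤ (k * P) ^ (2 / 3 : ℝ) := by
  refine le_rpow_two_thirds (by positivity) ?_
  rw [← pow_le_pow_iff_left₀ (by positivity) (by positivity) two_ne_zero]
  calc ((P / r ^ 2 * √(r ^ 3 * k)) ^ 3) ^ 2 = P ^ 6 / r ^ 12 * (√(r ^ 3 * k) ^ 2) ^ 3 := by ring
    _ = P ^ 4 * k ^ 3 * P ^ 2 / r ^ 3 := by
        rw [Real.sq_sqrt (by positivity)]
        field_simp
    _ ≤ P ^ 4 * k ^ 3 * (k * r ^ 3) / r ^ 3 := by gcongr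
    _ = ((k * P) ^ 2) ^ 2 := by field_simp

lemma exists_min_cube {M k j : ℕ} (hj : 0 < j) (hM : M ≤ k * j ^ 3) :
    ∃ r, 0 < r ∧ M ≤ k * r ^ 3 ∧ (∀ i, 0 < i → M ≤ k * i ^ 3 → r ≤ i) ∧
      (r = 1 ∨ k * r ^ 3 ≤ 8 * M) := by
  have hex : ∃ r, 0 < r ∧ M ≤ k * r ^ 3 := ⟨j, hj, hM⟩
  refine ⟨Nat.find hex, (Nat.find_spec hex).1, (Nat.find_spec hex).2,
    fun i hi h => Nat.find_min' hex ⟨hi, h⟩, ?_⟩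
  set r := Nat.find hex
  rcases Nat.lt_or_ge r 2 with h | h
  · exact .inl (by have := (Nat.find_spec hex).1; omega)
  · have hmin : ¬(0 < r - 1 ∧ M ≤ k * (r - 1) ^ 3) := Nat.find_min hex (by omega)
    have : k * (r - 1) ^ 3 < M := not_le.1 fun h' => hmin ⟨by omega, h'⟩
    refine .inr ?_
    calc k * r ^ 3 ≤ k * (2 * (r - 1)) ^ 3 := by gcongr; omega
      _ = 8 * (k * (r - 1) ^ 3) := by ring
      _ ≤ 8 * M := by omega

end Numerics

section Main

theorem card_solutions_le_of_sq_lt (A B C D : Finset ℝ) (hC : #B ^ 2 < #A * #D * #C)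
    (hB : #C ^ 2 < #A * #D * #B) :
    (#(solutions A B C D) : ℝ) ≤ 2 * (#A * #D) + 10 * (#A * #D * (#C * #B)) ^ (2 / 3 : ℝ) := by
  have hC0 : 0 < #C := Nat.pos_of_ne_zero fun h => by simp [h] at hC
  have hB0 : 0 < #B := Nat.pos_of_ne_zero fun h => by simp [h] at hB
  -- the least `r > 0` with `(|B| |C|)² ≤ |A| |D| r³` balances the two terms of the cell bound
  obtain ⟨r, hr, hrM, hmin, hr1⟩ := exists_min_cube (k := #A * #D) (M := (#C * #B) ^ 2) hC0
    (by nlinarith)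
  have hrC : r ≤ #C := hmin _ hC0 (by nlinarith)
  have hrB : r ≤ #B := hmin _ hB0 (by nlinarith)
  set X := ((#A : ℝ) * #D * (#C * #B)) ^ (2 / 3 : ℝ)
  have h₁ : 2 * r * (#A * #D : ℝ) ≤ 2 * (#A * #D) + 4 * X := by
    rcases hr1 with rfl | h
    · have : 0 ≤ X := by positivity
      norm_num
      linarith
    · have := mul_le_rpow_two_thirds (r := r) (by positivity) (by positivity)
        (by exact_mod_cast h : ((#A * #D : ℕ) : ℝ) * r ^ 3 ≤ 8 * ((#C * #B : ℕ) : ℝ) ^ 2)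
      push_cast at this
      change _ ≤ 2 * X at this
      have : 0 ≤ (#A * #D : ℝ) := by positivity
      linarith
  have h₂ : 4 * #C * #B / r ^ 2 * √(2 * r ^ 3 * (#A * #D) : ℝ) ≤ 6 * X := by
    have := div_sq_mul_sqrt_le_rpow_two_thirds (by positivity) (by positivity)
      (by exact_mod_cast hr : (0 : ℝ) < r)
      (by exact_mod_cast hrM : ((#C * #B : ℕ) : ℝ) ^ 2 ≤ ((#A * #D : ℕ) : ℝ) * r ^ 3)
    push_cast at this
    calc 4 * #C * #B / r ^ 2 * √(2 * r ^ 3 * (#A * #D) : ℝ)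
        = 4 * √2 * (#C * #B / r ^ 2 * √(r ^ 3 * (#A * #D) : ℝ)) := by
          rw [mul_assoc 2, Real.sqrt_mul zero_le_two]
          ring
      _ ≤ 4 * (3 / 2) * X := by
          gcongr
          exact Real.sqrt_le_iff.2 ⟨by norm_num, by norm_num⟩
      _ = 6 * X := by norm_num
  have := card_solutions_le_of_blocks A B C D hr hrC hrB
  linarith

theorem card_solutions_le (A B C D : Finset ℝ) :
    (#(solutions A B C D) : ℝ)
      ≤ 10 * ((#A * #B * #C * #D : ℝ) ^ (2 / 3 : ℝ) + #A * #D + #B * #C) := by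
  rw [show (#A * #B * #C * #D : ℝ) = #A * #D * (#C * #B) by ring]
  have hX : 0 ≤ (#A * #D * (#C * #B) : ℝ) ^ (2 / 3 : ℝ) := by positivity
  have hAD : 0 ≤ (#A * #D : ℝ) := by positivity
  have hBC : 0 ≤ (#B * #C : ℝ) := by positivity
  rcases le_or_gt (#A * #D * #C) (#B ^ 2) with hC | hC
  · have h₁ : (#(solutions A B C D) : ℝ) ≤ #A * #D * #C := by
      exact_mod_cast card_solutions_le_mul A B C D
    have h₂ := le_mul_rpow_two_thirds (by positivity) (by positivity)
      (by exact_mod_cast hC : ((#A * #D * #C : ℕ) : ℝ) ≤ (#B : ℝ) ^ 2)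
    push_cast at h₂
    rw [mul_assoc (#A * #D : ℝ)] at h₂
    linarith
  rcases le_or_gt (#A * #D * #B) (#C ^ 2) with hB | hB
  · have h₁ : (#(solutions A B C D) : ℝ) ≤ #A * #D * #B + #B * #C := by
      exact_mod_cast card_solutions_le_add A B C D
    have h₂ := le_mul_rpow_two_thirds (by positivity) (by positivity)
      (by exact_mod_cast hB : ((#A * #D * #B : ℕ) : ℝ) ≤ (#C : ℝ) ^ 2)
    push_cast at h₂
    rw [mul_assoc (#A * #D : ℝ), mul_comm (#B : ℝ)] at h₂
    linarith
  have := card_solutions_le_of_sq_lt A B C D hC hB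
  linarith

end Main

open scoped Classical in
theorem stmt_5 :
    ∃ C : ℝ, 0 < C ∧
      ∀ A B C' D : Finset ℝ,
        ((((A ×ˢ B ×ˢ C' ×ˢ D).filter fun x =>
            x.1 - x.2.1 = x.2.2.1 * x.2.2.2).card : ℝ)
          ≤ C * (((A.card : ℝ) * B.card * C'.card * D.card) ^ ((2 : ℝ) / 3)
              + (A.card : ℝ) * D.card + (B.card : ℝ) * C'.card)) :=
  ⟨10, by norm_num, card_solutions_le⟩
end

section
/- There exists an absolute constant C > 0 such that for every finite set T ⊆ ℝ, the number of six-tuples (t₁,t₂,t₃,t₄,t₅,t₆) ∈ T⁶ satisfying t₁t₂ = t₃t₄ − t₅t₆ is at most C·|T|^(14/3). -/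
/-!
Group the six-tuples by `(t₁, t₂)`: the fibre over `x = t₁ t₂` counts the `(c, d, e, f) ∈ T⁴`
with `c d - e f = x`. Read `(c, e)` as a point and `(d, f)` as a line of the plane. For `x = 0`
there are `O(n³)` solutions and only `O(n)` pairs have `t₁ t₂ = 0`, so it suffices to show
`O(n^{8/3})` solutions for every `x ≠ 0`, where `n = |T|`.

For `x ≠ 0` two distinct points lie on at most one common line, so `P` points and `L` lines have
at most `P √L + L` incidences (Cauchy–Schwarz on the line degrees). Applied to all of `T × T` this
only gives `n³`. Instead cut `T` by rank into `r ≈ n^{2/3}` consecutive blocks of `m ≈ n^{1/3}`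
elements, so that `T × T` becomes an `r × r` grid of cells with at most `m²` points each. Every
line is vertical or the graph of a monotone or antitone function, so it meets at most `2r` cells.
Summing the bound over the cells and using Cauchy–Schwarz once more gives
`m² √(r² · 2r · n²) + 2r n²`, which is `O(n^{8/3})`.
-/

open Finset
open scoped Classical

section Incidences

variable {α β γ : Type*}

noncomputable def incidences (A : Finset α) (B : Finset β) (Inc : α → β → Prop) : ℕ :=
  ∑ l ∈ B, #{p ∈ A | Inc p l}

variable {A : Finset α} {B : Finset β} {Inc : α → β → Prop}

lemma incidences_eq_sum_card_lines :
    incidences A B Inc = ∑ p ∈ A, #{l ∈ B | Inc p l} := by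
  simp only [incidences, card_filter]
  exact sum_comm

lemma sum_sq_card_filter_le_incidences_add_sq
    (h : ∀ p ∈ A, ∀ q ∈ A, p ≠ q → #{l ∈ B | Inc p l ∧ Inc q l} ≤ 1) :
    ∑ l ∈ B, #{p ∈ A | Inc p l} ^ 2 ≤ incidences A B Inc + #A ^ 2 := by
  have h_sq : ∀ l, #{p ∈ A | Inc p l} ^ 2
      = ∑ p ∈ A, ∑ q ∈ A, if Inc p l ∧ Inc q l then 1 else 0 := by
    intro l
    simp only [sq, card_filter, sum_mul_sum, ite_zero_mul_ite_zero, mul_one]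
  have h_row : ∀ p ∈ A, ∑ q ∈ A, #{l ∈ B | Inc p l ∧ Inc q l} ≤ #{l ∈ B | Inc p l} + #A := by
    intro p hp
    rw [← add_sum_erase A _ hp]
    simp only [and_self]
    gcongr
    calc ∑ q ∈ A.erase p, #{l ∈ B | Inc p l ∧ Inc q l}
        ≤ #(A.erase p) • 1 :=
          sum_le_card_nsmul _ _ _ fun q hq =>
            h p hp q (mem_of_mem_erase hq) (ne_of_mem_erase hq).symm
      _ ≤ #A := by simpa using card_erase_le
  calc ∑ l ∈ B, #{p ∈ A | Inc p l} ^ 2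
      = ∑ p ∈ A, ∑ q ∈ A, #{l ∈ B | Inc p l ∧ Inc q l} := by
        simp only [h_sq]
        simp only [card_filter]
        rw [sum_comm]
        exact sum_congr rfl fun p _ => sum_comm
    _ ≤ ∑ p ∈ A, (#{l ∈ B | Inc p l} + #A) := sum_le_sum h_row
    _ = incidences A B Inc + #A ^ 2 := by
        rw [sum_add_distrib, incidences_eq_sum_card_lines, sum_const, smul_eq_mul, sq]

lemma le_mul_sqrt_add_of_sq_le {I a b : ℝ} (ha : 0 ≤ a) (hb : 0 ≤ b)
    (h : I ^ 2 ≤ b * (I + a ^ 2)) : I ≤ a * √b + b := by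
  obtain ⟨s, hs, rfl⟩ : ∃ s, 0 ≤ s ∧ b = s ^ 2 := ⟨√b, Real.sqrt_nonneg b, (Real.sq_sqrt hb).symm⟩
  rw [Real.sqrt_sq hs]
  nlinarith [mul_nonneg ha hs]

theorem incidences_le_card_mul_sqrt_add_card
    (h : ∀ p ∈ A, ∀ q ∈ A, p ≠ q → #{l ∈ B | Inc p l ∧ Inc q l} ≤ 1) :
    (incidences A B Inc : ℝ) ≤ #A * √(#B : ℝ) + #B := by
  have h_cs : incidences A B Inc ^ 2 ≤ #B * (incidences A B Inc + #A ^ 2) :=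
    sq_sum_le_card_mul_sum_sq.trans
      (Nat.mul_le_mul_left _ (sum_sq_card_filter_le_incidences_add_sq h))
  exact le_mul_sqrt_add_of_sq_le (by positivity) (by positivity) (by exact_mod_cast h_cs)

lemma sum_sqrt_le_sqrt_card_mul_sum (R : Finset γ) (b : γ → ℝ) (hb : ∀ c, 0 ≤ b c) :
    ∑ c ∈ R, √(b c) ≤ √(#R * ∑ c ∈ R, b c) := by
  have := Real.sum_sqrt_mul_sqrt_le R (f := fun _ => 1) (fun _ => zero_le_one) hb
  simpa [Real.sqrt_mul (Nat.cast_nonneg _)] using this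

theorem incidences_le_of_cells [DecidableEq γ] {R : Finset γ} {cell : α → γ} {M K : ℕ}
    (h_cell : ∀ p ∈ A, cell p ∈ R) (h_M : ∀ c ∈ R, #{p ∈ A | cell p = c} ≤ M)
    (h_K : ∀ l ∈ B, #({p ∈ A | Inc p l}.image cell) ≤ K)
    (h : ∀ p ∈ A, ∀ q ∈ A, p ≠ q → #{l ∈ B | Inc p l ∧ Inc q l} ≤ 1) :
    (incidences A B Inc : ℝ) ≤ M * √(#R * (K * #B : ℝ)) + K * #B := by
  set A' : γ → Finset α := fun c => {p ∈ A | cell p = c}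
  set B' : γ → Finset β := fun c => {l ∈ B | ∃ p ∈ A' c, Inc p l}
  have h_split : incidences A B Inc = ∑ c ∈ R, incidences (A' c) (B' c) Inc := by
    calc incidences A B Inc = ∑ l ∈ B, ∑ c ∈ R, #{p ∈ A' c | Inc p l} := by
          refine sum_congr rfl fun l _ => ?_
          rw [card_eq_sum_card_fiberwise fun p hp => h_cell p (mem_filter.1 hp).1]
          simp only [A', filter_filter, and_comm]
      _ = ∑ c ∈ R, incidences (A' c) B Inc := sum_comm
      _ = ∑ c ∈ R, incidences (A' c) (B' c) Inc := by
          refine sum_congr rfl fun c _ => (sum_filter_of_ne fun l _ hl => ?_).symm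
          obtain ⟨p, hp⟩ := card_pos.1 (Nat.pos_of_ne_zero hl)
          exact ⟨p, (mem_filter.1 hp).1, (mem_filter.1 hp).2⟩
  have h_lines : ∑ c ∈ R, #(B' c) ≤ K * #B := by
    calc ∑ c ∈ R, #(B' c) = ∑ l ∈ B, #{c ∈ R | ∃ p ∈ A' c, Inc p l} := by
          simp only [B', card_filter]
          exact sum_comm
      _ ≤ ∑ _l ∈ B, K := sum_le_sum fun l hl => (card_le_card fun c hc => by
          obtain ⟨-, p, hp, hpl⟩ := mem_filter.1 hc
          obtain ⟨hpA, rfl⟩ := mem_filter.1 hp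
          exact mem_image_of_mem _ (mem_filter.2 ⟨hpA, hpl⟩)).trans (h_K l hl)
      _ = K * #B := by rw [sum_const, smul_eq_mul, mul_comm]
  have h_cell_bound : ∀ c ∈ R,
      (incidences (A' c) (B' c) Inc : ℝ) ≤ M * √(#(B' c) : ℝ) + #(B' c) := by
    intro c hc
    refine (incidences_le_card_mul_sqrt_add_card fun p hp q hq hpq => ?_).trans ?_
    · exact (card_le_card (filter_subset_filter _ (filter_subset _ _))).trans
        (h p (filter_subset _ _ hp) q (filter_subset _ _ hq) hpq)
    · gcongr
      exact_mod_cast h_M c hc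
  have h_lines' : (∑ c ∈ R, #(B' c) : ℝ) ≤ K * #B := by exact_mod_cast h_lines
  calc (incidences A B Inc : ℝ)
      ≤ ∑ c ∈ R, (M * √(#(B' c) : ℝ) + #(B' c)) := by
        rw [h_split, Nat.cast_sum]
        exact sum_le_sum h_cell_bound
    _ = M * ∑ c ∈ R, √(#(B' c) : ℝ) + ∑ c ∈ R, (#(B' c) : ℝ) := by
        rw [sum_add_distrib, mul_sum]
    _ ≤ M * √(#R * ∑ c ∈ R, (#(B' c) : ℝ)) + ∑ c ∈ R, (#(B' c) : ℝ) := by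
        gcongr
        exact sum_sqrt_le_sqrt_card_mul_sum R _ fun _ => Nat.cast_nonneg _
    _ ≤ M * √(#R * (K * #B : ℝ)) + K * #B := by gcongr

end Incidences

section Rank

variable {α : Type*} [LinearOrder α]

noncomputable def rankIn (T : Finset α) (t : α) : ℕ := #{s ∈ T | s < t}

lemma filter_lt_subset_filter_lt (T : Finset α) {a b : α} (hab : a ≤ b) :
    {s ∈ T | s < a} ⊆ {s ∈ T | s < b} := fun _ hs =>
  mem_filter.2 ⟨(mem_filter.1 hs).1, (mem_filter.1 hs).2.trans_le hab⟩

lemma rankIn_mono (T : Finset α) : Monotone (rankIn T) := fun _ _ hab =>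
  card_le_card (filter_lt_subset_filter_lt T hab)

lemma rankIn_strictMonoOn (T : Finset α) : StrictMonoOn (rankIn T) T := fun a ha _ _ hab =>
  card_lt_card <| (ssubset_iff_of_subset (filter_lt_subset_filter_lt T hab.le)).2
    ⟨a, mem_filter.2 ⟨ha, hab⟩, fun h => lt_irrefl a (mem_filter.1 h).2⟩

lemma rankIn_lt_card {T : Finset α} {t : α} (ht : t ∈ T) : rankIn T t < #T :=
  card_lt_card (filter_ssubset.2 ⟨t, ht, lt_irrefl t⟩)

lemma card_filter_rankIn_div_eq_le (T : Finset α) {m : ℕ} (hm : 0 < m) (i : ℕ) :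
    #{t ∈ T | rankIn T t / m = i} ≤ m := by
  calc #{t ∈ T | rankIn T t / m = i} ≤ #(Ico (i * m) (i * m + m)) := by
        refine card_le_card_of_injOn (rankIn T) (fun t ht => ?_)
          ((rankIn_strictMonoOn T).injOn.mono (filter_subset _ _))
        obtain ⟨-, rfl⟩ := mem_filter.1 ht
        exact mem_Ico.2 ⟨Nat.div_mul_le_self _ _, Nat.lt_div_mul_add hm⟩
    _ = m := by simp

end Rank

lemma card_image_pair_le_of_monotoneOn {α : Type*} [LinearOrder α] {S : Finset α} {u v : α → ℕ}
    {r : ℕ} (hu : ∀ a ∈ S, u a < r) (hv : ∀ a ∈ S, v a < r) (hu_mono : MonotoneOn u S)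
    (hv_mono : MonotoneOn v S ∨ AntitoneOn v S) :
    #(S.image fun a => (u a, v a)) ≤ 2 * r := by
  -- Along `S` the pair `(u, v)` moves monotonically, so `u + v` (resp. `u + (r - v)`) separates
  -- its values.
  obtain ⟨φ, hφ_lt, hφ_inj⟩ : ∃ φ : ℕ × ℕ → ℕ, (∀ a ∈ S, φ (u a, v a) < 2 * r) ∧
      ∀ a ∈ S, ∀ b ∈ S, a ≤ b → φ (u a, v a) = φ (u b, v b) → u a = u b ∧ v a = v b := by
    rcases hv_mono with hv_mono | hv_mono
    · refine ⟨fun q => q.1 + q.2, fun a ha => ?_, fun a ha b hb hab hφ => ?_⟩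
      · have := hu a ha; have := hv a ha; dsimp only; omega
      · have := hu_mono ha hb hab; have := hv_mono ha hb hab; dsimp only at hφ; omega
    · refine ⟨fun q => q.1 + (r - q.2), fun a ha => ?_, fun a ha b hb hab hφ => ?_⟩
      · have := hu a ha; have := hv a ha; dsimp only; omega
      · have := hu_mono ha hb hab; have := hv_mono ha hb hab
        have := hv a ha; have := hv b hb; dsimp only at hφ; omega
  calc #(S.image fun a => (u a, v a)) ≤ #(range (2 * r)) := by
        refine card_le_card_of_injOn φ ?_ ?_
        · simp only [Set.MapsTo, coe_image, Set.mem_image, mem_coe, mem_range,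
            forall_exists_index, and_imp, forall_apply_eq_imp_iff₂]
          exact hφ_lt
        · simp only [Set.InjOn, coe_image, Set.mem_image, mem_coe, forall_exists_index, and_imp,
            forall_apply_eq_imp_iff₂, Prod.mk.injEq]
          intro a ha b hb hab
          rcases le_total a b with h | h
          · exact hφ_inj a ha b hb h hab
          · exact (hφ_inj b hb a ha h hab.symm).imp Eq.symm Eq.symm
    _ = 2 * r := card_range _

/-- The point `p = (c, e)` lies on the line `l = (d, f)` of the pencil `c * d - e * f = x`. -/
def LiesOn (x : ℝ) (p l : ℝ × ℝ) : Prop := p.1 * l.1 - p.2 * l.2 = x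

lemma eq_of_liesOn_of_liesOn {x : ℝ} (hx : x ≠ 0) {p q l l' : ℝ × ℝ} (hpq : p ≠ q)
    (hp : LiesOn x p l) (hq : LiesOn x q l) (hp' : LiesOn x p l') (hq' : LiesOn x q l') :
    l = l' := by
  obtain ⟨c, e⟩ := p
  obtain ⟨c', e'⟩ := q
  obtain ⟨d, f⟩ := l
  obtain ⟨d', f'⟩ := l'
  simp only [LiesOn] at hp hq hp' hq'
  by_cases hdet : c * e' - c' * e = 0
  · refine absurd ?_ hpq
    have hc : (c' - c) * x = 0 := by linear_combination c * hq - c' * hp + f * hdet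
    have he : (e' - e) * x = 0 := by linear_combination e * hq - e' * hp + d * hdet
    rw [sub_eq_zero.1 ((mul_eq_zero.1 hc).resolve_right hx),
      sub_eq_zero.1 ((mul_eq_zero.1 he).resolve_right hx)]
  · have hd : (d - d') * (c * e' - c' * e) = 0 := by
      linear_combination e' * hp - e' * hp' - e * hq + e * hq'
    have hf : (f - f') * (c * e' - c' * e) = 0 := by
      linear_combination c' * hp - c' * hp' - c * hq + c * hq'
    rw [sub_eq_zero.1 ((mul_eq_zero.1 hd).resolve_right hdet),
      sub_eq_zero.1 ((mul_eq_zero.1 hf).resolve_right hdet)]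

lemma card_image_filter_liesOn_le {β : ℝ → ℕ} (hβ : Monotone β) {T : Finset ℝ} {r : ℕ}
    (hr : ∀ t ∈ T, β t < r) {x : ℝ} (hx : x ≠ 0) (l : ℝ × ℝ) :
    #({p ∈ T ×ˢ T | LiesOn x p l}.image fun p => (β p.1, β p.2)) ≤ 2 * r := by
  obtain ⟨d, f⟩ := l
  by_cases hf : f = 0
  · have hsub : {p ∈ T ×ˢ T | LiesOn x p (d, f)}.image (fun p => (β p.1, β p.2))
        ⊆ {β (x / d)} ×ˢ range r := by
      intro q hq
      obtain ⟨p, hp, rfl⟩ := mem_image.1 hq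
      obtain ⟨hpT, hp⟩ := mem_filter.1 hp
      simp only [LiesOn, hf, mul_zero, sub_zero] at hp
      have hd : d ≠ 0 := by rintro rfl; exact hx (by simp [← hp])
      refine mem_product.2 ⟨mem_singleton.2 ?_, mem_range.2 (hr _ (mem_product.1 hpT).2)⟩
      rw [← hp, mul_div_cancel_right₀ _ hd]
    calc _ ≤ #({β (x / d)} ×ˢ range r) := card_le_card hsub
      _ ≤ 2 * r := by simp; omega
  · set g : ℝ → ℝ := fun c => c * (d / f) - x / f
    have hsub : {p ∈ T ×ˢ T | LiesOn x p (d, f)}.image (fun p => (β p.1, β p.2))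
        ⊆ {c ∈ T | g c ∈ T}.image fun c => (β c, β (g c)) := by
      intro q hq
      obtain ⟨p, hp, rfl⟩ := mem_image.1 hq
      obtain ⟨hpT, hp⟩ := mem_filter.1 hp
      obtain ⟨hp1, hp2⟩ := mem_product.1 hpT
      simp only [LiesOn] at hp
      have hpg : p.2 = g p.1 := by simp only [g]; field_simp; linarith
      exact mem_image.2 ⟨p.1, mem_filter.2 ⟨hp1, hpg ▸ hp2⟩, by rw [hpg]⟩
    refine (card_le_card hsub).trans (card_image_pair_le_of_monotoneOn
      (fun c hc => hr c (mem_filter.1 hc).1) (fun c hc => hr _ (mem_filter.1 hc).2)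
      (hβ.monotoneOn _) ?_)
    rcases le_total 0 (d / f) with hs | hs
    · refine .inl ((hβ.comp fun a b hab => ?_).monotoneOn _)
      exact sub_le_sub_right (mul_le_mul_of_nonneg_right hab hs) _
    · refine .inr ((hβ.comp_antitone fun a b hab => ?_).antitoneOn _)
      exact sub_le_sub_right (mul_le_mul_of_nonpos_right hab hs) _

lemma incidences_liesOn_le_of_blocks (T : Finset ℝ) {x : ℝ} (hx : x ≠ 0) {m r : ℕ} (hm : 0 < m)
    (hr : #T < m * r) :
    (incidences (T ×ˢ T) (T ×ˢ T) (LiesOn x) : ℝ)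
      ≤ m ^ 2 * √(r ^ 2 * (2 * r * #T ^ 2 : ℝ)) + 2 * r * #T ^ 2 := by
  set β : ℝ → ℕ := fun t => rankIn T t / m
  have hβ_lt : ∀ t ∈ T, β t < r := fun t ht =>
    Nat.div_lt_of_lt_mul ((rankIn_lt_card ht).trans hr)
  have h_block : ∀ i, #{t ∈ T | β t = i} ≤ m := card_filter_rankIn_div_eq_le T hm
  have h_cells := incidences_le_of_cells (A := T ×ˢ T) (B := T ×ˢ T) (Inc := LiesOn x)
    (R := range r ×ˢ range r) (cell := fun p => (β p.1, β p.2)) (M := m ^ 2) (K := 2 * r)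
    (fun p hp => mem_product.2 ⟨mem_range.2 (hβ_lt _ (mem_product.1 hp).1),
      mem_range.2 (hβ_lt _ (mem_product.1 hp).2)⟩)
    (fun c _ => by
      calc #{p ∈ T ×ˢ T | (β p.1, β p.2) = c}
          ≤ #({t ∈ T | β t = c.1} ×ˢ {t ∈ T | β t = c.2}) := card_le_card fun p hp => by
            obtain ⟨hpT, rfl⟩ := mem_filter.1 hp
            obtain ⟨hp1, hp2⟩ := mem_product.1 hpT
            exact mem_product.2 ⟨mem_filter.2 ⟨hp1, rfl⟩, mem_filter.2 ⟨hp2, rfl⟩⟩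
        _ ≤ m ^ 2 := by rw [card_product, sq]; exact Nat.mul_le_mul (h_block _) (h_block _))
    (fun l _ => card_image_filter_liesOn_le (fun _ _ hab => Nat.div_le_div_right
      (rankIn_mono T hab)) hβ_lt hx l)
    (fun p _ q _ hpq => card_le_one.2 fun l hl l' hl' =>
      eq_of_liesOn_of_liesOn hx hpq (mem_filter.1 hl).2.1 (mem_filter.1 hl).2.2
        (mem_filter.1 hl').2.1 (mem_filter.1 hl').2.2)
  simpa [card_product, sq] using h_cells

theorem incidences_liesOn_le (T : Finset ℝ) {x : ℝ} (hx : x ≠ 0) :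
    (incidences (T ×ˢ T) (T ×ˢ T) (LiesOn x) : ℝ) ≤ 20 * (#T : ℝ) ^ ((8 : ℝ) / 3) := by
  rcases T.eq_empty_or_nonempty with rfl | hT
  · simp [incidences]
  set n := #T
  obtain ⟨s, hn, hs, h8⟩ : ∃ s : ℝ, (n : ℝ) = s ^ 3 ∧ 1 ≤ s ∧ (n : ℝ) ^ ((8 : ℝ) / 3) = s ^ 8 :=
    ⟨n ^ ((1 : ℝ) / 3), by rw [← Real.rpow_mul_natCast n.cast_nonneg]; norm_num,
      Real.one_le_rpow (by exact_mod_cast hT.card_pos) (by norm_num),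
      by rw [← Real.rpow_mul_natCast n.cast_nonneg]; norm_num⟩
  set m := ⌈s⌉₊
  have hm : 0 < m := Nat.ceil_pos.2 (by linarith)
  have hm_le : (m : ℝ) ≤ 2 * s := by linarith [Nat.ceil_lt_add_one (by linarith : 0 ≤ s)]
  set r := n / m + 1
  have hr_le : (r : ℝ) ≤ 2 * s ^ 2 := by
    have : ((n / m : ℕ) : ℝ) ≤ s ^ 2 := calc
      ((n / m : ℕ) : ℝ) ≤ n / m := Nat.cast_div_le
      _ ≤ s ^ 3 / s := by rw [hn]; gcongr; exact Nat.le_ceil s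
      _ = s ^ 2 := by field_simp
    push_cast [r]; nlinarith
  have h_sqrt : √(r ^ 2 * (2 * r * n ^ 2 : ℝ)) ≤ 4 * s ^ 6 := by
    refine Real.sqrt_le_iff.2 ⟨by positivity, ?_⟩
    calc (r : ℝ) ^ 2 * (2 * r * n ^ 2) ≤ (2 * s ^ 2) ^ 2 * (2 * (2 * s ^ 2) * (s ^ 3) ^ 2) := by
          rw [hn]; gcongr
      _ = (4 * s ^ 6) ^ 2 := by ring
  calc (incidences (T ×ˢ T) (T ×ˢ T) (LiesOn x) : ℝ)
      ≤ m ^ 2 * √(r ^ 2 * (2 * r * n ^ 2 : ℝ)) + 2 * r * n ^ 2 :=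
        incidences_liesOn_le_of_blocks T hx hm (Nat.lt_mul_div_succ n hm)
    _ ≤ (2 * s) ^ 2 * (4 * s ^ 6) + 2 * (2 * s ^ 2) * n ^ 2 := by gcongr
    _ = 20 * (n : ℝ) ^ ((8 : ℝ) / 3) := by rw [h8, hn]; ring

lemma card_filter_mul_eq_zero_le (T : Finset ℝ) : #{p ∈ T ×ˢ T | p.1 * p.2 = 0} ≤ 2 * #T := by
  calc #{p ∈ T ×ˢ T | p.1 * p.2 = 0} ≤ #({0} ×ˢ T ∪ T ×ˢ {0}) := card_le_card fun p hp => by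
        obtain ⟨hpT, hp⟩ := mem_filter.1 hp
        obtain ⟨hp1, hp2⟩ := mem_product.1 hpT
        rcases mul_eq_zero.1 hp with h | h
        · exact mem_union_left _ (mem_product.2 ⟨mem_singleton.2 h, hp2⟩)
        · exact mem_union_right _ (mem_product.2 ⟨hp1, mem_singleton.2 h⟩)
    _ ≤ #({0} ×ˢ T) + #(T ×ˢ {0}) := card_union_le _ _
    _ = 2 * #T := by simp [two_mul]

lemma card_filter_liesOn_zero_le (T : Finset ℝ) (l : ℝ × ℝ) :
    #{p ∈ T ×ˢ T | LiesOn 0 p l} ≤ #T + if l.1 * l.2 = 0 then #T ^ 2 else 0 := by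
  by_cases hl : l.2 = 0
  · simp only [hl, mul_zero, ite_true]
    exact (card_filter_le _ _).trans (by rw [card_product, sq]; omega)
  · refine le_add_right (card_le_card_of_injOn Prod.fst (fun p hp => ?_) fun p hp q hq hpq => ?_)
    · exact (mem_product.1 (mem_filter.1 hp).1).1
    · have hp' := (mem_filter.1 hp).2
      have hq' := (mem_filter.1 hq).2
      simp only [LiesOn, sub_eq_zero] at hp' hq'
      refine Prod.ext hpq (mul_right_cancel₀ hl ?_)
      rw [← hp', ← hq', hpq]

lemma incidences_liesOn_zero_le (T : Finset ℝ) :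
    incidences (T ×ˢ T) (T ×ˢ T) (LiesOn 0) ≤ 3 * #T ^ 3 := by
  calc incidences (T ×ˢ T) (T ×ˢ T) (LiesOn 0)
      ≤ ∑ l ∈ T ×ˢ T, (#T + if l.1 * l.2 = 0 then #T ^ 2 else 0) :=
        sum_le_sum fun l _ => card_filter_liesOn_zero_le T l
    _ = #T ^ 2 * #T + #{l ∈ T ×ˢ T | l.1 * l.2 = 0} * #T ^ 2 := by
        rw [sum_add_distrib, sum_const, sum_ite, sum_const_zero, sum_const, card_product,
          smul_eq_mul, smul_eq_mul, add_zero, sq]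
    _ ≤ #T ^ 2 * #T + 2 * #T * #T ^ 2 := by gcongr; exact card_filter_mul_eq_zero_le T
    _ = 3 * #T ^ 3 := by ring

lemma sum_incidences_liesOn_mul_eq_zero_le (T : Finset ℝ) :
    ∑ p ∈ T ×ˢ T with p.1 * p.2 = 0, incidences (T ×ˢ T) (T ×ˢ T) (LiesOn (p.1 * p.2))
      ≤ 6 * #T ^ 4 :=
  calc _ ≤ #{p ∈ T ×ˢ T | p.1 * p.2 = 0} • (3 * #T ^ 3) := sum_le_card_nsmul _ _ _ fun p hp => by
        rw [(mem_filter.1 hp).2]; exact incidences_liesOn_zero_le T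
    _ ≤ 2 * #T * (3 * #T ^ 3) := by rw [smul_eq_mul]; gcongr; exact card_filter_mul_eq_zero_le T
    _ = 6 * #T ^ 4 := by ring

lemma card_filter_eq_sum_incidences (T : Finset ℝ) :
    #((T ×ˢ T ×ˢ T ×ˢ T ×ˢ T ×ˢ T).filter
        fun t => t.1 * t.2.1 = t.2.2.1 * t.2.2.2.1 - t.2.2.2.2.1 * t.2.2.2.2.2)
      = ∑ p ∈ T ×ˢ T, incidences (T ×ˢ T) (T ×ˢ T) (LiesOn (p.1 * p.2)) := by
  simp only [incidences, LiesOn, card_filter, sum_product, eq_comm (a := _ * _ - _ * _)]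
  refine sum_congr rfl fun a _ => sum_congr rfl fun b _ => ?_
  rw [sum_comm]
  refine sum_congr rfl fun d _ => ?_
  rw [sum_congr rfl fun c _ => sum_comm, sum_comm]

theorem stmt_13 :
    ∃ C : ℝ, 0 < C ∧
      ∀ T : Finset ℝ,
        ((((T ×ˢ T ×ˢ T ×ˢ T ×ˢ T ×ˢ T).filter
            fun t => t.1 * t.2.1 = t.2.2.1 * t.2.2.2.1 - t.2.2.2.2.1 * t.2.2.2.2.2).card : ℝ)
          ≤ C * (T.card : ℝ) ^ ((14 : ℝ) / 3)) := by
  refine ⟨26, by norm_num, fun T => ?_⟩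
  rcases T.eq_empty_or_nonempty with rfl | hT
  · simp
  have hn : (1 : ℝ) ≤ #T := by exact_mod_cast hT.card_pos
  have h_zero : ∑ p ∈ T ×ˢ T with p.1 * p.2 = 0,
      (incidences (T ×ˢ T) (T ×ˢ T) (LiesOn (p.1 * p.2)) : ℝ) ≤ 6 * #T ^ 4 := by
    exact_mod_cast sum_incidences_liesOn_mul_eq_zero_le T
  have h_nonzero : ∑ p ∈ T ×ˢ T with p.1 * p.2 ≠ 0,
      (incidences (T ×ˢ T) (T ×ˢ T) (LiesOn (p.1 * p.2)) : ℝ)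
        ≤ #T ^ 2 * (20 * #T ^ ((8 : ℝ) / 3)) := by
    calc _ ≤ ∑ p ∈ T ×ˢ T with p.1 * p.2 ≠ 0, 20 * (#T : ℝ) ^ ((8 : ℝ) / 3) :=
          sum_le_sum fun p hp => incidences_liesOn_le T (mem_filter.1 hp).2
      _ ≤ _ := by
          rw [sum_const, nsmul_eq_mul]; gcongr
          exact_mod_cast (card_filter_le _ _).trans (card_product T T).le |>.trans_eq (sq _).symm
  have h_exp : (#T : ℝ) ^ ((14 : ℝ) / 3) = #T ^ 2 * #T ^ ((8 : ℝ) / 3) := by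
    rw [← Real.rpow_natCast, ← Real.rpow_add (by positivity)]; norm_num
  have h_four : (#T : ℝ) ^ 4 ≤ #T ^ ((14 : ℝ) / 3) := by
    rw [← Real.rpow_natCast]; exact Real.rpow_le_rpow_of_exponent_le hn (by norm_num)
  rw [card_filter_eq_sum_incidences, Nat.cast_sum,
    ← sum_filter_add_sum_filter_not _ fun p : ℝ × ℝ => p.1 * p.2 = 0]
  nlinarith
end

section
/- Let K > 0 and suppose that for every finite set P ⊆ ℝ² \ {0} the number of quadruples (q,q',r,r') ∈ P⁴ with ω(q,q') = ω(r,r') ≠ 0 is at most K·|P|³. Then there exists a constant C depending only on K such that for every finite set A ⊆ ℝ \ {0}, the additive energy satisfies E(A) ≤ C·|AA|³/|A|. -/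
/-!
Split the additive quadruples `a₁ + a₂ = a₃ + a₄` according to whether the common sum
vanishes. If it does, `(a₁, a₃)` determines the quadruple, giving at most
`|A|² ≤ |AA|³/|A|` of them. Otherwise, since `ω((xu, v⁻¹), (-yv, u⁻¹)) = x + y`, each such
quadruple together with any `a, b, c, d ∈ A` yields a distinct `ω`-energy quadruple in
`P = (AA ∪ -AA) × A⁻¹`, so the hypothesis gives
`|A|⁴ · #{nonzero-sum quadruples} ≤ K|P|³ ≤ 8K|AA|³|A|³`.
-/

open Finset
open scoped Pointwise Classical

/-- The standard non-degenerate skew-symmetric bilinear form on `ℝ²`. -/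
noncomputable def omegaForm (q q' : ℝ × ℝ) : ℝ := q.1 * q'.2 - q.2 * q'.1

/-- The number of quadruples `(q,q',r,r') ∈ P⁴` with `ω(q,q') = ω(r,r') ≠ 0`. -/
noncomputable def omegaEnergy (P : Finset (ℝ × ℝ)) : ℕ :=
  ((P ×ˢ P ×ˢ P ×ˢ P).filter fun x =>
      omegaForm x.1 x.2.1 = omegaForm x.2.2.1 x.2.2.2 ∧
      omegaForm x.1 x.2.1 ≠ 0).card

/-- The quadruples counted by the additive energy `E(A)`. -/
def addQuadruples {G : Type*} [AddCommGroup G] [DecidableEq G] (A : Finset G) :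
    Finset (G × G × G × G) :=
  {x ∈ A ×ˢ A ×ˢ A ×ˢ A | x.1 + x.2.1 = x.2.2.1 + x.2.2.2}

lemma card_addQuadruples_filter_eq_zero_le {G : Type*} [AddCommGroup G] [DecidableEq G]
    (A : Finset G) : #{x ∈ addQuadruples A | x.1 + x.2.1 = 0} ≤ #A ^ 2 := by
  rw [sq, ← card_product]
  refine card_le_card_of_injOn (fun x => (x.1, x.2.2.1)) ?_ ?_
  · intro x hx
    simp only [addQuadruples, mem_coe, mem_filter, mem_product] at hx
    exact mem_product.mpr ⟨hx.1.1.1, hx.1.1.2.2.1⟩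
  · rintro ⟨a₁, a₂, a₃, a₄⟩ hx ⟨b₁, b₂, b₃, b₄⟩ hy hxy
    simp only [addQuadruples, mem_coe, mem_filter, mem_product] at hx hy
    simp only [Prod.mk.injEq] at hxy ⊢
    obtain ⟨rfl, rfl⟩ := hxy
    refine ⟨rfl, ?_, rfl, ?_⟩
    · exact add_left_cancel (hx.2.trans hy.2.symm)
    · exact add_left_cancel ((hx.1.2.symm.trans hx.2).trans (hy.2.symm.trans hy.1.2))

lemma omegaForm_mul_inv (x y : ℝ) {u v : ℝ} (hu : u ≠ 0) (hv : v ≠ 0) :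
    omegaForm (x * u, v⁻¹) (-(y * v), u⁻¹) = x + y := by
  unfold omegaForm
  field_simp
  ring

/-- The embedding is
`(a₁, a₂, a₃, a₄; a, b, c, d) ↦ ((a₁a, b⁻¹), (-a₂b, a⁻¹), (a₃c, d⁻¹), (-a₄d, c⁻¹))`: the second
coordinates recover `a, b, c, d`, and then the first ones recover `a₁, a₂, a₃, a₄`. -/
lemma card_addQuadruples_filter_ne_zero_mul_le_omegaEnergy {A : Finset ℝ} (hA : (0 : ℝ) ∉ A) :
    #{x ∈ addQuadruples A | x.1 + x.2.1 ≠ 0} * #A ^ 4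
      ≤ omegaEnergy ((A * A ∪ -(A * A)) ×ˢ A⁻¹) := by
  have hA₀ : ∀ a ∈ A, a ≠ 0 := fun a ha h => hA (h ▸ ha)
  have hA4 : #A ^ 4 = #((A ×ˢ A) ×ˢ (A ×ˢ A)) := by simp only [card_product]; ring
  rw [hA4, ← card_product, omegaEnergy]
  refine card_le_card_of_injOn (fun z =>
      ((z.1.1 * z.2.1.1, z.2.1.2⁻¹), (-(z.1.2.1 * z.2.1.2), z.2.1.1⁻¹),
        (z.1.2.2.1 * z.2.2.1, z.2.2.2⁻¹), (-(z.1.2.2.2 * z.2.2.2), z.2.2.1⁻¹))) ?_ ?_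
  · rintro ⟨⟨a₁, a₂, a₃, a₄⟩, ⟨a, b⟩, ⟨c, d⟩⟩ hz
    simp only [addQuadruples, coe_product, Set.mem_prod, mem_coe, mem_filter, mem_product] at hz
    obtain ⟨⟨⟨⟨h₁, h₂, h₃, h₄⟩, hsum⟩, hne⟩, ⟨ha, hb⟩, hc, hd⟩ := hz
    simp only [mem_coe, mem_filter, mem_product, mem_union]
    rw [omegaForm_mul_inv _ _ (hA₀ a ha) (hA₀ b hb),
      omegaForm_mul_inv _ _ (hA₀ c hc) (hA₀ d hd)]
    exact ⟨⟨⟨.inl (mul_mem_mul h₁ ha), inv_mem_inv hb⟩,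
      ⟨.inr (neg_mem_neg (mul_mem_mul h₂ hb)), inv_mem_inv ha⟩,
      ⟨.inl (mul_mem_mul h₃ hc), inv_mem_inv hd⟩,
      ⟨.inr (neg_mem_neg (mul_mem_mul h₄ hd)), inv_mem_inv hc⟩⟩, hsum, hne⟩
  · rintro ⟨⟨a₁, a₂, a₃, a₄⟩, ⟨a, b⟩, ⟨c, d⟩⟩ hz
      ⟨⟨a₁', a₂', a₃', a₄'⟩, ⟨a', b'⟩, ⟨c', d'⟩⟩ - hzz'
    simp only [coe_product, Set.mem_prod, mem_coe] at hz
    obtain ⟨-, ⟨ha, hb⟩, hc, hd⟩ := hz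
    simp only [Prod.mk.injEq, inv_inj, neg_inj] at hzz'
    obtain ⟨⟨h₁, rfl⟩, ⟨h₂, rfl⟩, ⟨h₃, rfl⟩, ⟨h₄, rfl⟩⟩ := hzz'
    simp only [mul_left_inj' (hA₀ _ ha), mul_left_inj' (hA₀ _ hb), mul_left_inj' (hA₀ _ hc),
      mul_left_inj' (hA₀ _ hd)] at h₁ h₂ h₃ h₄
    simp [h₁, h₂, h₃, h₄]

lemma card_union_neg_product_inv_le (D A : Finset ℝ) :
    #((D ∪ -D) ×ˢ A⁻¹) ≤ 2 * #D * #A := by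
  rw [card_product, card_inv, two_mul]
  exact Nat.mul_le_mul_right _ ((card_union_le _ _).trans_eq (by rw [card_neg]))

lemma ne_zero_of_mem_product_inv {D A : Finset ℝ} (hA : (0 : ℝ) ∉ A) :
    ∀ p ∈ D ×ˢ A⁻¹, p ≠ 0 := by
  intro p hp hp₀
  obtain ⟨a, ha, hap⟩ := mem_inv.mp (mem_product.mp hp).2
  rw [hp₀, Prod.snd_zero, inv_eq_zero] at hap
  exact hA (hap ▸ ha)

lemma card_addQuadruples_filter_ne_zero_mul_le {K : ℝ} (hK : 0 < K)
    (hyp : ∀ P : Finset (ℝ × ℝ), (∀ p ∈ P, p ≠ (0 : ℝ × ℝ)) →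
      ((omegaEnergy P : ℝ) ≤ K * (P.card : ℝ) ^ 3))
    {A : Finset ℝ} (hA : (0 : ℝ) ∉ A) (hA' : A.Nonempty) :
    (#{x ∈ addQuadruples A | x.1 + x.2.1 ≠ 0} : ℝ) * #A ≤ 8 * K * #(A * A) ^ 3 := by
  set Q := (A * A ∪ -(A * A)) ×ˢ A⁻¹
  have hQ : (#Q : ℝ) ≤ 2 * #(A * A) * #A := by
    exact_mod_cast card_union_neg_product_inv_le _ _
  refine le_of_mul_le_mul_right ?_ (by positivity : (0 : ℝ) < #A ^ 3)
  calc (#{x ∈ addQuadruples A | x.1 + x.2.1 ≠ 0} : ℝ) * #A * #A ^ 3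
      = (#{x ∈ addQuadruples A | x.1 + x.2.1 ≠ 0} * #A ^ 4 : ℕ) := by push_cast; ring
    _ ≤ omegaEnergy Q := by
      exact_mod_cast card_addQuadruples_filter_ne_zero_mul_le_omegaEnergy hA
    _ ≤ K * #Q ^ 3 := hyp Q (ne_zero_of_mem_product_inv hA)
    _ ≤ K * (2 * #(A * A) * #A) ^ 3 := by gcongr
    _ = 8 * K * #(A * A) ^ 3 * #A ^ 3 := by ring

lemma card_addQuadruples_filter_eq_zero_mul_le (A : Finset ℝ) :
    (#{x ∈ addQuadruples A | x.1 + x.2.1 = 0} : ℝ) * #A ≤ #(A * A) ^ 3 := by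
  have hAA : (#A : ℝ) ≤ #(A * A) := by exact_mod_cast card_le_card_mul_self₀
  calc (#{x ∈ addQuadruples A | x.1 + x.2.1 = 0} : ℝ) * #A
      ≤ #A ^ 2 * #A := by gcongr; exact_mod_cast card_addQuadruples_filter_eq_zero_le A
    _ = #A ^ 3 := by ring
    _ ≤ #(A * A) ^ 3 := by gcongr

theorem stmt_16 (K : ℝ) (hK : 0 < K)
    (hyp : ∀ P : Finset (ℝ × ℝ), (∀ p ∈ P, p ≠ (0 : ℝ × ℝ)) →
      ((omegaEnergy P : ℝ) ≤ K * (P.card : ℝ) ^ 3)) :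
    ∃ C : ℝ, 0 < C ∧
      ∀ A : Finset ℝ, (0 : ℝ) ∉ A →
        ((((A ×ˢ A ×ˢ A ×ˢ A).filter fun x =>
            x.1 + x.2.1 = x.2.2.1 + x.2.2.2).card : ℝ)
          ≤ C * ((A * A).card : ℝ) ^ 3 / (A.card : ℝ)) := by
  refine ⟨8 * K + 1, by positivity, fun A hA => ?_⟩
  obtain rfl | hA' := A.eq_empty_or_nonempty
  · simp
  change (#(addQuadruples A) : ℝ) ≤ _
  have hzero := card_addQuadruples_filter_eq_zero_mul_le A
  have hnonzero := card_addQuadruples_filter_ne_zero_mul_le hK hyp hA hA'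
  rw [le_div_iff₀ (by positivity),
    ← card_filter_add_card_filter_not (s := addQuadruples A) (fun x => x.1 + x.2.1 = 0)]
  push_cast
  linarith
end
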